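/- If x is a positive root and w ∈ W has ℓ(w) = dp(x) and w⁻¹x ∈ Φ⁻ (i.e., w ∈ T(x)), then (b, x) > 0 for every b ∈ N(w⁻¹). The same holds for w ∈ S(x) (ℓ(w) = dp(x) - 1 and w⁻¹x ∈ Π). -/

import Mathlib

open Real

variable {V : Type*} [AddCommGroup V] [Module ℝ V]

/-- The set of positive linear combinations of a set `A`. -/
def PLC (A : Set V) : Set V :=
  {v | ∃ (s : Finset V) (c : V → ℝ), (↑s : Set V) ⊆ A ∧ (∀ x ∈ s, 0 ≤ c x) ∧
    (∃ x ∈ s, 0 < c x) ∧ v = ∑ x ∈ s, c x • x}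

/-- A Coxeter datum (Krammer): a root basis `Pi` in `V` with bilinear form `B`. -/
structure CoxeterDatum (V : Type*) [AddCommGroup V] [Module ℝ V] where
  B : LinearMap.BilinForm ℝ V
  Pi : Set V
  norm_one : ∀ a ∈ Pi, B a a = 1
  symm : ∀ a ∈ Pi, ∀ b ∈ Pi, B a b = B b a
  offdiag : ∀ a ∈ Pi, ∀ b ∈ Pi, a ≠ b →
    (∃ m : ℕ, 2 ≤ m ∧ B a b = -Real.cos (Real.pi / m)) ∨ B a b ≤ -1
  zero_not_plc : (0 : V) ∉ PLC Pi

namespace CoxeterDatum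

variable (D : CoxeterDatum V)

/-- The reflection in the vector `a`, as a linear endomorphism of `V`. -/
noncomputable def refl (a : V) : Module.End ℝ V where
  toFun x := x - (2 * D.B x a) • a
  map_add' x y := by simp only [map_add, LinearMap.add_apply]; module
  map_smul' c x := by simp only [map_smul, LinearMap.smul_apply, smul_eq_mul,
    RingHom.id_apply]; module

/-- The set of simple reflections, as invertible endomorphisms of `V`. -/
def simples : Set (Module.End ℝ V)ˣ :=
  {u | ∃ a ∈ D.Pi, (u : Module.End ℝ V) = D.refl a}

/-- The Coxeter group `W`, realized as the group generated by the simple reflections. -/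
noncomputable def Wgrp : Subgroup (Module.End ℝ V)ˣ := Subgroup.closure D.simples

/-- The root system. -/
def roots : Set V :=
  {x | ∃ w ∈ D.Wgrp, ∃ a ∈ D.Pi, x = (w : Module.End ℝ V) a}

/-- The positive roots. -/
def posRoots : Set V := D.roots ∩ PLC D.Pi

/-- The negative roots. -/
def negRoots : Set V := {x | -x ∈ D.posRoots}

/-- The length of an element of `W` with respect to the simple reflections. -/
noncomputable def len (w : (Module.End ℝ V)ˣ) : ℕ :=
  sInf {n | ∃ l : List (Module.End ℝ V)ˣ,
    l.length = n ∧ (∀ u ∈ l, u ∈ D.simples) ∧ l.prod = w}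

/-- The depth of a root. -/
noncomputable def dp (x : V) : ℕ :=
  sInf {n | ∃ w ∈ D.Wgrp, D.len w = n ∧ (w : Module.End ℝ V) x ∈ D.negRoots}

/-- Dominance: `x` dominates `y` if every `w ∈ W` making `x` negative makes `y` negative. -/
def dom (x y : V) : Prop :=
  ∀ w ∈ D.Wgrp, (w : Module.End ℝ V) x ∈ D.negRoots → (w : Module.End ℝ V) y ∈ D.negRoots

/-- `D(x)`: the set of positive roots other than `x` dominated by `x`. -/
def DSet (x : V) : Set V := {y | y ∈ D.posRoots ∧ y ≠ x ∧ D.dom x y}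

/-- `D_n`: the set of positive roots dominating exactly `n` other positive roots. -/
def Dn (n : ℕ) : Set V :=
  {x | x ∈ D.posRoots ∧ (D.DSet x).Finite ∧ (D.DSet x).ncard = n}

/-- The set of reflections of `W`. -/
def TSet : Set (Module.End ℝ V)ˣ :=
  {t | ∃ w ∈ D.Wgrp, ∃ s ∈ D.simples, t = w * s * w⁻¹}

/-- `N(w)`: the set of positive roots sent to negative roots by `w`. -/
def NSet (w : (Module.End ℝ V)ˣ) : Set V :=
  {z | z ∈ D.posRoots ∧ (w : Module.End ℝ V) z ∈ D.negRoots}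

/-- `N̄(w)`: the reflections `t` with `ℓ(wt) < ℓ(w)`. -/
def Nbar (w : (Module.End ℝ V)ˣ) : Set (Module.End ℝ V)ˣ :=
  {t | t ∈ D.TSet ∧ D.len (w * t) < D.len w}

/-- The canonical generators of a reflection subgroup `W'`. -/
def canGens (W' : Subgroup (Module.End ℝ V)ˣ) : Set (Module.End ℝ V)ˣ :=
  {t | t ∈ D.TSet ∧ D.Nbar t ∩ (W' : Set (Module.End ℝ V)ˣ) = {t}}

/-- `S(x)`: elements of `W` of minimal length sending `x` into `Π` (inverse-wise). -/
def SSet (x : V) : Set (Module.End ℝ V)ˣ :=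
  {w | w ∈ D.Wgrp ∧ D.len w = D.dp x - 1 ∧ ((w⁻¹ : (Module.End ℝ V)ˣ) : Module.End ℝ V) x ∈ D.Pi}

end CoxeterDatum


/-!
If `b ∈ N(w⁻¹)` then `ℓ(w⁻¹ r_b) < ℓ(w⁻¹)`. For `w ∈ T(x)` and `(b, x) ≤ 0` the vector
`w⁻¹ r_b x = w⁻¹ x - 2 (x, b) w⁻¹ b` is a nonnegative combination of the negative roots `w⁻¹ x`
and `w⁻¹ b`, hence negative, so `dp(x) ≤ ℓ(w⁻¹ r_b) < ℓ(w) = dp(x)`. For `w ∈ S(x)` put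
`a = w⁻¹ x ∈ Π`: then `w s_a ∈ T(x)`, and `N(w⁻¹) ⊆ N(s_a w⁻¹)` because `s_a` permutes
`Φ⁺ \ {a}`.

Both facts rest on `Φ = Φ⁺ ⊔ Φ⁻`. For Krammer's root bases, where `Π` need not be linearly
independent, it follows by induction on `ℓ(w)`: write `w = v u` with `u` in the dihedral group
`⟨s_a, s_c⟩` and `v` of minimal length in that coset, so that `v a` and `v c` are positive.
The coefficients of `u⁻¹ a` in `a` and `c` are consecutive values `U_j(γ)`, `U_{j-1}(γ)` of
Chebyshev polynomials of the second kind at `γ = -(a, c)`, and for `γ = cos (π / m)` or `γ ≥ 1`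
these never have opposite signs.
-/

section PLC

variable {A : Set V}

theorem mem_PLC_iff {v : V} : v ∈ PLC A ↔ ∃ f : V →₀ ℝ,
    ↑f.support ⊆ A ∧ 0 ≤ f ∧ f ≠ 0 ∧ Finsupp.linearCombination ℝ id f = v := by
  classical
  constructor
  · rintro ⟨s, c, hsA, hc, ⟨x, hxs, hx⟩, rfl⟩
    let f : V →₀ ℝ := Finsupp.onFinset s (fun y => if y ∈ s then c y else 0)
      (fun y hy => by by_contra h; simp [h] at hy)
    refine ⟨f, fun y hy => hsA (Finsupp.support_onFinset_subset hy), fun y => ?_, ?_, ?_⟩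
    · simp only [f, Finsupp.onFinset_apply, Finsupp.coe_zero, Pi.zero_apply]
      split_ifs with h
      exacts [hc y h, le_rfl]
    · intro h
      have := congrArg (· x) h
      simp [f, hxs] at this
      exact hx.ne' this
    · rw [Finsupp.linearCombination_onFinset]
      exact Finset.sum_congr rfl fun y hy => by simp [hy]
  · rintro ⟨f, hfA, hf0, hf, rfl⟩
    obtain ⟨x, hx⟩ := Finsupp.support_nonempty_iff.2 hf
    exact ⟨f.support, f, hfA, fun y _ => hf0 y,
      ⟨x, hx, (hf0 x).lt_of_ne' (Finsupp.mem_support_iff.1 hx)⟩,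
      Finsupp.linearCombination_apply ℝ f⟩

theorem subset_PLC : A ⊆ PLC A := fun a ha =>
  mem_PLC_iff.2 ⟨Finsupp.single a 1, by simpa using ha, by simp, by simp, by simp⟩

theorem add_mem_PLC {u v : V} (hu : u ∈ PLC A) (hv : v ∈ PLC A) : u + v ∈ PLC A := by
  obtain ⟨f, hfA, hf0, hf, rfl⟩ := mem_PLC_iff.1 hu
  obtain ⟨g, hgA, hg0, -, rfl⟩ := mem_PLC_iff.1 hv
  refine mem_PLC_iff.2 ⟨f + g, ?_, add_nonneg hf0 hg0, ?_, map_add _ f g⟩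
  · classical
    exact (Finset.coe_subset.2 Finsupp.support_add).trans (by simpa using ⟨hfA, hgA⟩)
  · exact fun h => hf ((add_eq_zero_iff_of_nonneg hf0 hg0).1 h).1

theorem smul_mem_PLC {u : V} {t : ℝ} (ht : 0 < t) (hu : u ∈ PLC A) : t • u ∈ PLC A := by
  obtain ⟨f, hfA, hf0, hf, rfl⟩ := mem_PLC_iff.1 hu
  exact mem_PLC_iff.2 ⟨t • f, (Finset.coe_subset.2 Finsupp.support_smul).trans hfA,
    smul_nonneg ht.le hf0, smul_ne_zero ht.ne' hf, map_smul _ t f⟩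

theorem add_smul_mem_PLC {u v : V} {t : ℝ} (hu : u ∈ PLC A) (ht : 0 ≤ t) (hv : v ∈ PLC A) :
    u + t • v ∈ PLC A := by
  rcases ht.eq_or_lt with rfl | ht
  · simpa using hu
  · exact add_mem_PLC hu (smul_mem_PLC ht hv)

theorem smul_add_smul_mem_PLC {p q : V} {s t : ℝ} (hp : p ∈ PLC A) (hq : q ∈ PLC A)
    (hs : 0 ≤ s) (ht : 0 ≤ t) (hne : s ≠ 0 ∨ t ≠ 0) : s • p + t • q ∈ PLC A := by
  rcases hs.eq_or_lt with rfl | hs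
  · simpa using smul_mem_PLC (ht.lt_of_ne' (hne.resolve_left (not_not.2 rfl))) hq
  · exact add_smul_mem_PLC (smul_mem_PLC hs hp) ht hq

theorem smul_add_smul_mem_PLC_or_neg_mem {p q : V} {s t : ℝ} (hp : p ∈ PLC A)
    (hq : q ∈ PLC A) (hst : 0 ≤ s * t) (hne : s ≠ 0 ∨ t ≠ 0) :
    s • p + t • q ∈ PLC A ∨ -(s • p + t • q) ∈ PLC A := by
  rcases mul_nonneg_iff.1 hst with ⟨hs, ht⟩ | ⟨hs, ht⟩
  · exact .inl (smul_add_smul_mem_PLC hp hq hs ht hne)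
  · refine .inr ?_
    rw [neg_add, ← neg_smul, ← neg_smul]
    exact smul_add_smul_mem_PLC hp hq (neg_nonneg.2 hs) (neg_nonneg.2 ht) (by simpa using hne)

end PLC

section Chebyshev

open Real Polynomial Polynomial.Chebyshev

theorem Real.sin_int_mul_mul_sin_add_one_mul_nonneg (m : ℕ) (k : ℤ) :
    0 ≤ sin (k * (π / m)) * sin ((k + 1) * (π / m)) := by
  rcases Nat.eq_zero_or_pos m with rfl | hm
  · simp
  have hperiodic : Function.Periodic (fun x => sin x * sin (x + π / m)) π :=
    sin_antiperiodic.mul (sin_antiperiodic.add_const _)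
  obtain ⟨q, r, hr0, hrm, rfl⟩ : ∃ q r : ℤ, 0 ≤ r ∧ r < m ∧ k = r + m * q :=
    ⟨k / m, k % m, Int.emod_nonneg _ (by omega), Int.emod_lt_of_pos _ (by omega),
      by rw [add_comm, Int.mul_ediv_add_emod]⟩
  have hr : (r : ℝ) + 1 ≤ m := by exact_mod_cast hrm
  have hr0' : (0 : ℝ) ≤ r := by exact_mod_cast hr0
  have hθ : 0 < π / m := by positivity
  have hmθ : (m : ℝ) * (π / m) = π := by field_simp
  have hshift : ((r + m * q : ℤ) : ℝ) * (π / m) = r * (π / m) + q * π := by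
    push_cast; field_simp
  rw [hshift, add_one_mul, hshift]
  refine (hperiodic.int_mul q (r * (π / m))).ge.trans' (mul_nonneg ?_ ?_)
  all_goals apply sin_nonneg_of_nonneg_of_le_pi
  all_goals nlinarith

namespace Polynomial.Chebyshev

theorem U_sq_add_U_sub_one_sq (R : Type*) [CommRing R] (n : ℤ) :
    U R n ^ 2 + U R (n - 1) ^ 2 - 2 * X * U R n * U R (n - 1) = 1 := by
  induction n using Int.induction_on with
  | zero => simp [U_zero, U_neg_one]
  | succ n ih =>
    rw [add_sub_cancel_right, U_add_one]
    linear_combination ih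
  | pred n ih =>
    have h := U_sub_one R (-n - 1)
    rw [sub_add_cancel, sub_sub, one_add_one_eq_two] at h
    rw [sub_sub, one_add_one_eq_two]
    linear_combination ih + (U R (-n - 2) - U R (-n)) * h

theorem U_eval_mul_U_eval_sub_one_nonneg_of_one_le {γ : ℝ} (hγ : 1 ≤ γ) (n : ℤ) :
    0 ≤ (U ℝ n).eval γ * (U ℝ (n - 1)).eval γ := by
  have hmono (k : ℕ) : 0 ≤ (U ℝ ((k : ℤ) - 1)).eval γ ∧
      (U ℝ ((k : ℤ) - 1)).eval γ ≤ (U ℝ k).eval γ := by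
    induction k with
    | zero => simp [U_zero, U_neg_one]
    | succ k ih =>
      push_cast
      rw [add_sub_cancel_right, U_add_one, eval_sub, eval_mul, eval_mul, eval_X, eval_ofNat]
      constructor <;> nlinarith
  have hnat (k : ℕ) : 0 ≤ (U ℝ k).eval γ * (U ℝ ((k : ℤ) - 1)).eval γ :=
    mul_nonneg ((hmono k).1.trans (hmono k).2) (hmono k).1
  rcases le_or_gt 0 n with hn | hn
  · lift n to ℕ using hn
    exact hnat n
  · obtain ⟨k, rfl⟩ : ∃ k : ℕ, n = -k - 1 := ⟨(-n - 1).toNat, by omega⟩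
    rw [U_neg_sub_one, sub_sub, one_add_one_eq_two, U_neg_sub_two, eval_neg, eval_neg,
      neg_mul_neg, mul_comm]
    exact hnat k

theorem U_eval_cos_mul_U_eval_sub_one_nonneg {m : ℕ} (hm : 2 ≤ m) (n : ℤ) :
    0 ≤ (U ℝ n).eval (cos (π / m)) * (U ℝ (n - 1)).eval (cos (π / m)) := by
  have hsin : 0 < sin (π / m) := by
    apply sin_pos_of_pos_of_lt_pi (by positivity)
    rw [div_lt_iff₀ (by positivity)]
    have : (2 : ℝ) ≤ m := by exact_mod_cast hm
    nlinarith [pi_pos]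
  have hn := U_real_cos (π / m) n
  have hn' := U_real_cos (π / m) (n - 1)
  push_cast at hn'
  rw [sub_add_cancel] at hn'
  refine (mul_nonneg_iff_of_pos_right (pow_pos hsin 2)).1 ?_
  have := Real.sin_int_mul_mul_sin_add_one_mul_nonneg m n
  rw [← hn, ← hn'] at this
  linarith

end Polynomial.Chebyshev

def IsChebyshevCombination (γ : ℝ) (a c v : V) : Prop :=
  ∃ j : ℤ, v = (U ℝ j).eval γ • a + (U ℝ (j - 1)).eval γ • c ∨
    v = (U ℝ (j - 1)).eval γ • a + (U ℝ j).eval γ • c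

theorem IsChebyshevCombination.swap {γ : ℝ} {a c v : V} (h : IsChebyshevCombination γ a c v) :
    IsChebyshevCombination γ c a v :=
  let ⟨j, hj⟩ := h
  ⟨j, hj.symm.imp (fun h => h.trans (add_comm _ _)) (fun h => h.trans (add_comm _ _))⟩

theorem IsChebyshevCombination.exists_smul_add_smul {γ : ℝ} {a c v : V}
    (hγ : ∀ j : ℤ, 0 ≤ (U ℝ j).eval γ * (U ℝ (j - 1)).eval γ)
    (h : IsChebyshevCombination γ a c v) :
    ∃ s t : ℝ, v = s • a + t • c ∧ 0 ≤ s * t ∧ (s ≠ 0 ∨ t ≠ 0) := by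
  obtain ⟨j, hj⟩ := h
  have hne : (U ℝ j).eval γ ≠ 0 ∨ (U ℝ (j - 1)).eval γ ≠ 0 := by
    by_contra! hzero
    simpa [hzero.1, hzero.2] using congrArg (eval γ) (U_sq_add_U_sub_one_sq ℝ j)
  rcases hj with hj | hj
  · exact ⟨_, _, hj, hγ j, hne⟩
  · exact ⟨_, _, hj, mul_comm ((U ℝ j).eval γ) _ ▸ hγ j, hne.symm⟩

end Chebyshev

namespace CoxeterDatum

open Module Polynomial Polynomial.Chebyshev

variable {D : CoxeterDatum V}

theorem neg_notMem_PLC {u : V} (hu : u ∈ PLC D.Pi) : -u ∉ PLC D.Pi := fun h =>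
  D.zero_not_plc (by simpa using add_mem_PLC hu h)

theorem B_nonpos_of_ne {a b : V} (ha : a ∈ D.Pi) (hb : b ∈ D.Pi) (hab : a ≠ b) :
    D.B a b ≤ 0 := by
  rcases D.offdiag a ha b hb hab with ⟨m, hm, h⟩ | h
  · have hm' : (2 : ℝ) ≤ m := by exact_mod_cast hm
    have hθ : 0 ≤ π / m := by positivity
    rw [h, neg_nonpos]
    exact Real.cos_nonneg_of_neg_pi_div_two_le_of_le (by linarith [Real.pi_pos])
      (div_le_div_of_nonneg_left Real.pi_pos.le two_pos hm')
  · linarith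

theorem B_linearCombination_left (f : V →₀ ℝ) (y : V) :
    D.B (Finsupp.linearCombination ℝ id f) y = f.sum fun p r => r * D.B p y := by
  simp [Finsupp.linearCombination_apply, Finsupp.sum, map_sum]

variable (D) in
noncomputable def rootSpan : Submodule ℝ V := Submodule.span ℝ D.Pi

theorem B_comm_of_mem_rootSpan {x y : V} (hx : x ∈ D.rootSpan) (hy : y ∈ D.rootSpan) :
    D.B x y = D.B y x := by
  have hPi : ∀ a ∈ D.Pi, D.B x a = D.B a x := fun a ha =>
    (LinearMap.eqOn_span' (f := D.B.flip a) (g := D.B a)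
      (fun b hb => D.symm b hb a ha) hx :)
  exact LinearMap.eqOn_span' (f := D.B x) (g := D.B.flip x) hPi hy

theorem refl_apply (a x : V) : D.refl a x = x - (2 * D.B x a) • a := rfl

theorem refl_self {a : V} (ha : D.B a a = 1) : D.refl a a = -a := by
  rw [refl_apply, ha]
  module

theorem refl_refl {b : V} (hb : D.B b b = 1) (x : V) : D.refl b (D.refl b x) = x := by
  simp only [refl_apply, map_sub, map_smul, hb]
  module

variable (D) in
noncomputable def reflUnit (b : V) (hb : D.B b b = 1) : (End ℝ V)ˣ where
  val := D.refl b
  inv := D.refl b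
  val_inv := LinearMap.ext (refl_refl hb)
  inv_val := LinearMap.ext (refl_refl hb)

theorem coe_reflUnit {b : V} (hb : D.B b b = 1) : (D.reflUnit b hb : End ℝ V) = D.refl b :=
  rfl

theorem reflUnit_mul_self {b : V} (hb : D.B b b = 1) : D.reflUnit b hb * D.reflUnit b hb = 1 :=
  Units.ext (LinearMap.ext (refl_refl hb))

theorem reflUnit_inv {b : V} (hb : D.B b b = 1) : (D.reflUnit b hb)⁻¹ = D.reflUnit b hb :=
  inv_eq_of_mul_eq_one_right (reflUnit_mul_self hb)

theorem reflUnit_mem_simples {a : V} (ha : a ∈ D.Pi) : D.reflUnit a (D.norm_one a ha) ∈ D.simples :=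
  ⟨a, ha, rfl⟩

theorem exists_eq_reflUnit_of_mem_simples {u : (End ℝ V)ˣ} (hu : u ∈ D.simples) :
    ∃ a, ∃ ha : a ∈ D.Pi, u = D.reflUnit a (D.norm_one a ha) := by
  obtain ⟨a, ha, hval⟩ := hu
  exact ⟨a, ha, Units.ext hval⟩

theorem inv_eq_self_of_mem_simples {u : (End ℝ V)ˣ} (hu : u ∈ D.simples) : u⁻¹ = u := by
  obtain ⟨a, ha, rfl⟩ := exists_eq_reflUnit_of_mem_simples hu
  exact reflUnit_inv _

theorem reflUnit_mem_Wgrp {a : V} (ha : a ∈ D.Pi) : D.reflUnit a (D.norm_one a ha) ∈ D.Wgrp :=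
  Subgroup.subset_closure (reflUnit_mem_simples ha)

theorem units_mul_apply (w v : (End ℝ V)ˣ) (x : V) :
    ((w * v : (End ℝ V)ˣ) : End ℝ V) x = (w : End ℝ V) ((v : End ℝ V) x) := rfl

theorem units_apply_inv_apply (w : (End ℝ V)ˣ) (x : V) :
    (w : End ℝ V) (((w⁻¹ : (End ℝ V)ˣ) : End ℝ V) x) = x := by
  rw [← units_mul_apply, mul_inv_cancel, Units.val_one, End.one_apply]

theorem Wgrp_induction {p : (End ℝ V)ˣ → Prop}
    (simple : ∀ u ∈ D.simples, p u) (one : p 1)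
    (mul : ∀ w ∈ D.Wgrp, ∀ v ∈ D.Wgrp, p w → p v → p (w * v))
    {w : (End ℝ V)ˣ} (hw : w ∈ D.Wgrp) : p w := by
  induction hw using Subgroup.closure_induction'' with
  | mem u hu => exact simple u hu
  | inv_mem u hu => exact inv_eq_self_of_mem_simples hu ▸ simple u hu
  | one => exact one
  | mul w v hw' hv' hw hv => exact mul w hw' v hv' hw hv

theorem apply_mem_rootSpan {w : (End ℝ V)ˣ} (hw : w ∈ D.Wgrp) {y : V} (hy : y ∈ D.rootSpan) :
    (w : End ℝ V) y ∈ D.rootSpan := by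
  refine Wgrp_induction (p := fun w => ∀ y ∈ D.rootSpan, (w : End ℝ V) y ∈ D.rootSpan)
    (fun u hu y hy => ?_) (fun y hy => hy) (fun w _ v _ hw hv y hy => hw _ (hv y hy)) hw y hy
  obtain ⟨a, ha, rfl⟩ := exists_eq_reflUnit_of_mem_simples hu
  exact sub_mem hy (Submodule.smul_mem _ _ (Submodule.subset_span ha))

theorem B_apply_apply {w : (End ℝ V)ˣ} (hw : w ∈ D.Wgrp) (x : V) {y : V}
    (hy : y ∈ D.rootSpan) : D.B ((w : End ℝ V) x) ((w : End ℝ V) y) = D.B x y := by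
  refine Wgrp_induction
    (p := fun w => ∀ x, ∀ y ∈ D.rootSpan, D.B ((w : End ℝ V) x) ((w : End ℝ V) y) = D.B x y)
    (fun u hu x y hy => ?_) (fun _ _ _ => rfl) (fun w _ v hv hw' hv' x y hy => ?_) hw x y hy
  · obtain ⟨a, ha, rfl⟩ := exists_eq_reflUnit_of_mem_simples hu
    have hay := B_comm_of_mem_rootSpan (Submodule.subset_span ha) hy
    simp only [coe_reflUnit, refl_apply, map_sub, map_smul, LinearMap.sub_apply,
      LinearMap.smul_apply, smul_eq_mul, D.norm_one a ha]
    linear_combination (-2 * D.B x a) * hay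
  · rw [units_mul_apply, units_mul_apply, hw' _ _ (apply_mem_rootSpan hv hy), hv' _ _ hy]

theorem mem_roots_of_mem_Pi {a : V} (ha : a ∈ D.Pi) : a ∈ D.roots :=
  ⟨1, one_mem _, a, ha, rfl⟩

theorem mem_rootSpan_of_mem_roots {x : V} (hx : x ∈ D.roots) : x ∈ D.rootSpan := by
  obtain ⟨w, hw, a, ha, rfl⟩ := hx
  exact apply_mem_rootSpan hw (Submodule.subset_span ha)

theorem B_self_of_mem_roots {x : V} (hx : x ∈ D.roots) : D.B x x = 1 := by
  obtain ⟨w, hw, a, ha, rfl⟩ := hx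
  rw [B_apply_apply hw _ (Submodule.subset_span ha), D.norm_one a ha]

theorem apply_mem_roots {w : (End ℝ V)ˣ} (hw : w ∈ D.Wgrp) {x : V} (hx : x ∈ D.roots) :
    (w : End ℝ V) x ∈ D.roots := by
  obtain ⟨v, hv, a, ha, rfl⟩ := hx
  exact ⟨w * v, mul_mem hw hv, a, ha, rfl⟩

theorem neg_mem_roots {x : V} (hx : x ∈ D.roots) : -x ∈ D.roots := by
  obtain ⟨w, hw, a, ha, rfl⟩ := hx
  refine ⟨w * D.reflUnit a (D.norm_one a ha), mul_mem hw (reflUnit_mem_Wgrp ha), a, ha, ?_⟩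
  rw [units_mul_apply, coe_reflUnit, refl_self (D.norm_one a ha), map_neg]

theorem mul_reflUnit_mul_inv {w : (End ℝ V)ˣ} (hw : w ∈ D.Wgrp) {b b' : V}
    (hb : b ∈ D.rootSpan) (hwb : (w : End ℝ V) b = b') (hb₁ : D.B b b = 1) (hb'₁ : D.B b' b' = 1) :
    w * D.reflUnit b hb₁ * w⁻¹ = D.reflUnit b' hb'₁ := by
  subst hwb
  refine Units.ext (LinearMap.ext fun x => ?_)
  conv_rhs => rw [coe_reflUnit, refl_apply, ← units_apply_inv_apply w x, B_apply_apply hw _ hb]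
  rw [units_mul_apply, units_mul_apply, coe_reflUnit, refl_apply, map_sub, map_smul,
    units_apply_inv_apply]

theorem reflUnit_mem_Wgrp_of_mem_roots {b : V} (hb : b ∈ D.roots) :
    D.reflUnit b (B_self_of_mem_roots hb) ∈ D.Wgrp := by
  obtain ⟨w, hw, a, ha, rfl⟩ := hb
  rw [← mul_reflUnit_mul_inv hw (Submodule.subset_span ha) rfl (D.norm_one a ha)]
  exact mul_mem (mul_mem hw (reflUnit_mem_Wgrp ha)) (inv_mem hw)

theorem eq_zero_of_linearCombination_eq_zero {a : V} (ha : a ∈ D.Pi) {κ : V →₀ ℝ}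
    (hκPi : ↑κ.support ⊆ D.Pi) (hκ : Finsupp.linearCombination ℝ id κ = 0)
    (hκ_nonneg : ∀ p ≠ a, 0 ≤ κ p) : κ = 0 := by
  classical
  have hκ0 : 0 ≤ κ := by
    intro p
    by_cases hp : p = a
    swap
    · exact hκ_nonneg p hp
    subst hp
    -- If `κ a < 0`, then pairing with `a` gives a negative value, since `B` is nonpositive
    -- on distinct simple roots.
    by_contra hneg
    replace hneg : κ p < 0 := not_le.1 hneg
    have hmem : p ∈ κ.support := Finsupp.mem_support_iff.2 hneg.ne
    have hBneg : D.B (Finsupp.linearCombination ℝ id κ) p < 0 := by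
      rw [B_linearCombination_left, Finsupp.sum, ← Finset.add_sum_erase _ _ hmem,
        D.norm_one p ha, mul_one]
      refine add_neg_of_neg_of_nonpos hneg (Finset.sum_nonpos fun q hq => ?_)
      obtain ⟨hqp, hq⟩ := Finset.mem_erase.1 hq
      exact mul_nonpos_of_nonneg_of_nonpos (hκ_nonneg q hqp) (B_nonpos_of_ne (hκPi hq) ha hqp)
    rw [hκ, map_zero, LinearMap.zero_apply] at hBneg
    exact hBneg.false
  by_contra hne
  exact D.zero_not_plc (mem_PLC_iff.2 ⟨κ, hκPi, hκ0, hne, hκ⟩)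

theorem eq_of_neg_refl_mem_PLC {a c : V} (ha : a ∈ D.Pi) (hc : c ∈ PLC D.Pi)
    (hcc : D.B c c = 1) (h : -(D.refl a c) ∈ PLC D.Pi) : c = a := by
  classical
  obtain ⟨f, hfPi, hf0, -, rfl⟩ := mem_PLC_iff.1 hc
  obtain ⟨g, hgPi, hg0, -, hg⟩ := mem_PLC_iff.1 h
  -- `c + (-s_a c) = 2 (c, a) a`, so `κ` is a vanishing combination of simple roots whose
  -- coefficients off `a` are nonnegative
  set κ : V →₀ ℝ := f + g - Finsupp.single a (2 * D.B (Finsupp.linearCombination ℝ id f) a)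
  have hκ_ne (p : V) (hp : p ≠ a) : κ p = f p + g p := by
    simp [κ, Ne.symm hp]
  have hκ_zero : κ = 0 := by
    refine eq_zero_of_linearCombination_eq_zero ha ?_ ?_
      (fun p hp => (hκ_ne p hp).symm ▸ add_nonneg (hf0 p) (hg0 p))
    · refine (Finset.coe_subset.2 Finsupp.support_sub).trans ?_
      simp only [Finset.coe_union, Set.union_subset_iff]
      exact ⟨(Finset.coe_subset.2 Finsupp.support_add).trans (by simpa using ⟨hfPi, hgPi⟩),
        (Finset.coe_subset.2 Finsupp.support_single_subset).trans (by simpa using ha)⟩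
    · simp only [κ, map_sub, map_add, hg, refl_apply, Finsupp.linearCombination_single, id]
      abel
  obtain ⟨t, rfl⟩ : ∃ t, f = Finsupp.single a t := by
    refine ⟨f a, Finsupp.ext fun p => ?_⟩
    by_cases hp : p = a
    · simp [hp]
    · have hfg := hκ_ne p hp
      rw [hκ_zero, Finsupp.coe_zero, Pi.zero_apply] at hfg
      have hfp : 0 ≤ f p := hf0 p
      have hgp : 0 ≤ g p := hg0 p
      simp only [Finsupp.single_apply, Ne.symm hp, if_false]
      linarith
  have ht : 0 ≤ t := by simpa using hf0 a
  simp only [Finsupp.linearCombination_single, id, map_smul, LinearMap.smul_apply,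
    smul_eq_mul, D.norm_one a ha, mul_one] at hcc
  rw [Finsupp.linearCombination_single, id, show t = 1 by nlinarith, one_smul]

theorem exists_word {w : (End ℝ V)ˣ} (hw : w ∈ D.Wgrp) :
    ∃ l : List (End ℝ V)ˣ, (∀ u ∈ l, u ∈ D.simples) ∧ l.prod = w := by
  refine Wgrp_induction (p := fun w => ∃ l : List (End ℝ V)ˣ, (∀ u ∈ l, u ∈ D.simples) ∧
    l.prod = w) (fun u hu => ⟨[u], by simpa using hu, by simp⟩) ⟨[], by simp, rfl⟩ ?_ hw
  rintro w - v - ⟨l, hl, rfl⟩ ⟨m, hm, rfl⟩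
  exact ⟨l ++ m, fun u hu => (List.mem_append.1 hu).elim (hl u) (hm u), List.prod_append⟩

theorem prod_mem_Wgrp {l : List (End ℝ V)ˣ} (hl : ∀ u ∈ l, u ∈ D.simples) : l.prod ∈ D.Wgrp :=
  Subgroup.list_prod_mem _ fun u hu => Subgroup.subset_closure (hl u hu)

theorem len_prod_le_length {l : List (End ℝ V)ˣ} (hl : ∀ u ∈ l, u ∈ D.simples) :
    D.len l.prod ≤ l.length :=
  Nat.sInf_le ⟨l, rfl, hl, rfl⟩

theorem exists_reduced_word {w : (End ℝ V)ˣ} (hw : w ∈ D.Wgrp) :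
    ∃ l : List (End ℝ V)ˣ, (∀ u ∈ l, u ∈ D.simples) ∧ l.length = D.len w ∧ l.prod = w := by
  obtain ⟨l, hl, hlw⟩ := exists_word hw
  have hne : {n | ∃ l : List (End ℝ V)ˣ,
      l.length = n ∧ (∀ u ∈ l, u ∈ D.simples) ∧ l.prod = w}.Nonempty :=
    ⟨l.length, l, rfl, hl, hlw⟩
  obtain ⟨m, hm, hms, hmw⟩ := Nat.sInf_mem hne
  exact ⟨m, hms, hm, hmw⟩

theorem len_mul_le {w v : (End ℝ V)ˣ} (hw : w ∈ D.Wgrp) (hv : v ∈ D.Wgrp) :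
    D.len (w * v) ≤ D.len w + D.len v := by
  obtain ⟨l, hl, hlen, rfl⟩ := exists_reduced_word hw
  obtain ⟨m, hm, hmlen, rfl⟩ := exists_reduced_word hv
  rw [← hlen, ← hmlen, ← List.length_append, ← List.prod_append]
  exact len_prod_le_length fun u hu => (List.mem_append.1 hu).elim (hl u) (hm u)

theorem len_le_one_of_mem_simples {s : (End ℝ V)ˣ} (hs : s ∈ D.simples) : D.len s ≤ 1 := by
  simpa using len_prod_le_length (l := [s]) (by simpa using hs)

theorem len_inv_le {w : (End ℝ V)ˣ} (hw : w ∈ D.Wgrp) : D.len w⁻¹ ≤ D.len w := by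
  obtain ⟨l, hl, hlen, rfl⟩ := exists_reduced_word hw
  have hinv : l.map (·⁻¹) = l :=
    (List.map_congr_left fun u hu => inv_eq_self_of_mem_simples (hl u hu)).trans (List.map_id l)
  rw [List.prod_inv_reverse, hinv, ← hlen, ← List.length_reverse]
  exact len_prod_le_length fun u hu => hl u (List.mem_reverse.1 hu)

theorem len_inv {w : (End ℝ V)ˣ} (hw : w ∈ D.Wgrp) : D.len w⁻¹ = D.len w :=
  (len_inv_le hw).antisymm (by simpa using len_inv_le (inv_mem hw))

theorem eq_one_of_len_eq_zero {w : (End ℝ V)ˣ} (hw : w ∈ D.Wgrp) (h : D.len w = 0) : w = 1 := by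
  obtain ⟨l, -, hlen, rfl⟩ := exists_reduced_word hw
  rw [List.length_eq_zero_iff.1 (hlen.trans h), List.prod_nil]

theorem isChebyshevCombination_refl {γ : ℝ} {a c v : V} (haa : D.B a a = 1)
    (hca : D.B c a = -γ) (h : IsChebyshevCombination γ a c v) :
    IsChebyshevCombination γ a c (D.refl a v) := by
  have hrec (j : ℤ) : (U ℝ (j + 1)).eval γ = 2 * γ * (U ℝ j).eval γ - (U ℝ (j - 1)).eval γ := by
    simp [U_add_one]
  have hra : D.refl a a = -a := refl_self haa
  have hrc : D.refl a c = c + (2 * γ) • a := by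
    rw [refl_apply, hca]
    module
  obtain ⟨j, rfl | rfl⟩ := h
  · refine ⟨j - 1, .inr ?_⟩
    rw [map_add, map_smul, map_smul, hra, hrc, sub_sub, one_add_one_eq_two]
    have := hrec (j - 1)
    rw [sub_add_cancel, sub_sub, one_add_one_eq_two] at this
    linear_combination (norm := module) (-this) • a
  · refine ⟨j + 1, .inl ?_⟩
    rw [map_add, map_smul, map_smul, hra, hrc, add_sub_cancel_right, hrec j]
    module

theorem isChebyshevCombination_of_mem_closure {a c : V} (ha : a ∈ D.Pi) (hc : c ∈ D.Pi)
    {u : (End ℝ V)ˣ}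
    (hu : u ∈ Subgroup.closure {D.reflUnit a (D.norm_one a ha), D.reflUnit c (D.norm_one c hc)}) :
    IsChebyshevCombination (-D.B a c) a c ((u : End ℝ V) a) := by
  have hstep (s : (End ℝ V)ˣ)
      (hs : s ∈ ({D.reflUnit a (D.norm_one a ha), D.reflUnit c (D.norm_one c hc)} : Set _))
      (v : V) (hv : IsChebyshevCombination (-D.B a c) a c v) :
      IsChebyshevCombination (-D.B a c) a c ((s : End ℝ V) v) := by
    rcases hs with rfl | rfl
    · exact isChebyshevCombination_refl (D.norm_one a ha) (by rw [D.symm c hc a ha, neg_neg]) hv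
    · exact (isChebyshevCombination_refl (D.norm_one c hc) (neg_neg _).symm hv.swap).swap
  induction hu using Subgroup.closure_induction_left with
  | one => exact ⟨0, .inl (by simp [U_zero, U_neg_one])⟩
  | mul_left s hs u _ ih => exact hstep s hs _ ih
  | inv_mul_cancel s hs u _ ih =>
    have hs_inv : s⁻¹ = s := by rcases hs with rfl | rfl <;> exact reflUnit_inv _
    rw [hs_inv]
    exact hstep s hs _ ih

theorem U_eval_mul_U_eval_sub_one_nonneg_of_ne {a c : V} (ha : a ∈ D.Pi) (hc : c ∈ D.Pi)
    (hac : a ≠ c) (j : ℤ) :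
    0 ≤ (U ℝ j).eval (-D.B a c) * (U ℝ (j - 1)).eval (-D.B a c) := by
  rcases D.offdiag a ha c hc hac with ⟨m, hm, h⟩ | h
  · rw [h, neg_neg]
    exact U_eval_cos_mul_U_eval_sub_one_nonneg hm j
  · exact U_eval_mul_U_eval_sub_one_nonneg_of_one_le (by linarith) j

theorem exists_word_prod_mul_reflUnit {b : V} (hb : b ∈ D.posRoots) {l : List (End ℝ V)ˣ}
    (hl : ∀ u ∈ l, u ∈ D.simples)
    (hdich : ∀ v ∈ D.Wgrp, D.len v < l.length →
      (v : End ℝ V) b ∈ PLC D.Pi ∨ -((v : End ℝ V) b) ∈ PLC D.Pi)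
    (hneg : -((l.prod : End ℝ V) b) ∈ PLC D.Pi) :
    ∃ l' : List (End ℝ V)ˣ, (∀ u ∈ l', u ∈ D.simples) ∧ l'.length + 1 = l.length ∧
      l'.prod = l.prod * D.reflUnit b (B_self_of_mem_roots hb.1) := by
  induction l with
  | nil => exact absurd hneg (by simpa using neg_notMem_PLC hb.2)
  | cons s l ih =>
    have hl' : ∀ u ∈ l, u ∈ D.simples := fun u hu => hl u (List.mem_cons_of_mem s hu)
    have hlW := prod_mem_Wgrp hl'
    rcases hdich _ hlW (by simpa [Nat.lt_succ_iff] using len_prod_le_length hl') with hpos | hneg'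
    -- `s = s_α` is the letter at which the image of `b` turns negative: `l.prod b = α`, so
    -- `l.prod * r_b = s_α * l.prod` and this letter can be deleted.
    · obtain ⟨α, hα, rfl⟩ := exists_eq_reflUnit_of_mem_simples (hl s List.mem_cons_self)
      have hbα : (l.prod : End ℝ V) b = α := by
        refine eq_of_neg_refl_mem_PLC hα hpos ?_
          (by simpa [units_mul_apply, coe_reflUnit] using hneg)
        rw [B_apply_apply hlW _ (mem_rootSpan_of_mem_roots hb.1), B_self_of_mem_roots hb.1]
      have hconj := mul_reflUnit_mul_inv hlW (mem_rootSpan_of_mem_roots hb.1) hbα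
        (B_self_of_mem_roots hb.1) (D.norm_one α hα)
      refine ⟨l, hl', rfl, ?_⟩
      rw [List.prod_cons, ← hconj]
      simp only [mul_assoc, inv_mul_cancel_left, reflUnit_mul_self, mul_one]
    · obtain ⟨l', hl'', hlen, hprod⟩ := ih hl'
        (fun v hv hlt => hdich v hv (hlt.trans (Nat.lt_succ_self _))) hneg'
      refine ⟨s :: l', ?_, by simp [hlen], by rw [List.prod_cons, List.prod_cons, hprod, mul_assoc]⟩
      exact List.forall_mem_cons.2 ⟨hl s List.mem_cons_self, hl''⟩

theorem len_mul_reflUnit_lt {w : (End ℝ V)ˣ} (hw : w ∈ D.Wgrp) {b : V} (hb : b ∈ D.posRoots)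
    (hdich : ∀ v ∈ D.Wgrp, D.len v < D.len w →
      (v : End ℝ V) b ∈ PLC D.Pi ∨ -((v : End ℝ V) b) ∈ PLC D.Pi)
    (hneg : -((w : End ℝ V) b) ∈ PLC D.Pi) :
    D.len (w * D.reflUnit b (B_self_of_mem_roots hb.1)) < D.len w := by
  obtain ⟨l, hl, hlen, rfl⟩ := exists_reduced_word hw
  obtain ⟨l', hl', hlen', hprod⟩ := exists_word_prod_mul_reflUnit hb hl (hlen ▸ hdich) hneg
  have := len_prod_le_length hl'
  rw [hprod] at this
  omega

theorem apply_mem_PLC_of_len_le_len_mul {v : (End ℝ V)ˣ} (hv : v ∈ D.Wgrp) {d : V}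
    (hd : d ∈ D.Pi)
    (hdich : ∀ v' ∈ D.Wgrp, D.len v' ≤ D.len v →
      (v' : End ℝ V) d ∈ PLC D.Pi ∨ -((v' : End ℝ V) d) ∈ PLC D.Pi)
    (hmin : D.len v ≤ D.len (v * D.reflUnit d (D.norm_one d hd))) :
    (v : End ℝ V) d ∈ PLC D.Pi :=
  (hdich v hv le_rfl).resolve_right fun hneg =>
    (len_mul_reflUnit_lt hv ⟨mem_roots_of_mem_Pi hd, subset_PLC hd⟩
      (fun v' hv' h => hdich v' hv' h.le) hneg).not_ge hmin

theorem exists_len_mul_reflUnit_lt {w : (End ℝ V)ˣ} (hw : w ∈ D.Wgrp) (h : D.len w ≠ 0) :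
    ∃ c, ∃ hc : c ∈ D.Pi, D.len (w * D.reflUnit c (D.norm_one c hc)) < D.len w := by
  obtain ⟨l, hl, hlen, rfl⟩ := exists_reduced_word hw
  obtain ⟨l, s, rfl⟩ := (List.eq_nil_or_concat l).resolve_left (by rintro rfl; simp_all)
  obtain ⟨c, hc, rfl⟩ := exists_eq_reflUnit_of_mem_simples (hl s (by simp))
  refine ⟨c, hc, ?_⟩
  rw [← hlen, List.concat_eq_append, List.prod_append, List.prod_singleton, mul_assoc,
    reflUnit_mul_self, mul_one]
  simpa [Nat.lt_succ_iff] using len_prod_le_length fun u hu => hl u (by simp [hu])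

/-- Write `w = v u` with `u` in the dihedral group `⟨s_a, s_c⟩` and `v` of minimal length in
`w ⟨s_a, s_c⟩`. Then `v a` and `v c` lie in `PLC Π`, and `u⁻¹ a` is a combination of `a` and
`c` with coefficients of one sign. -/
theorem apply_mem_PLC_or_neg_mem_PLC_of_dihedral {w : (End ℝ V)ˣ} (hw : w ∈ D.Wgrp) {a c : V}
    (ha : a ∈ D.Pi) (hc : c ∈ D.Pi) (hac : a ≠ c)
    (hshort : D.len (w * D.reflUnit c (D.norm_one c hc)) < D.len w)
    (hbelow : ∀ v ∈ D.Wgrp, D.len v < D.len w → ∀ d ∈ D.Pi,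
      (v : End ℝ V) d ∈ PLC D.Pi ∨ -((v : End ℝ V) d) ∈ PLC D.Pi) :
    (w : End ℝ V) a ∈ PLC D.Pi ∨ -((w : End ℝ V) a) ∈ PLC D.Pi := by
  set P := Subgroup.closure {D.reflUnit a (D.norm_one a ha), D.reflUnit c (D.norm_one c hc)}
  have hPW : P ≤ D.Wgrp := (Subgroup.closure_le _).2 <| by
    rintro _ (rfl | rfl) <;> exact reflUnit_mem_Wgrp ‹_›
  have hcP : D.reflUnit c (D.norm_one c hc) ∈ P := Subgroup.subset_closure (by simp)
  obtain ⟨u, hu, hmin⟩ := (measure fun u => D.len (w * u)).wf.has_min P ⟨_, hcP⟩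
  have hmin' (u' : (End ℝ V)ˣ) (hu' : u' ∈ P) : D.len (w * u) ≤ D.len (w * u') :=
    not_lt.1 (hmin u' hu')
  have hvW : w * u ∈ D.Wgrp := mul_mem hw (hPW hu)
  have hvlen : D.len (w * u) < D.len w := (hmin' _ hcP).trans_lt hshort
  have hpos (d : V) (hd : d ∈ D.Pi) (hdP : D.reflUnit d (D.norm_one d hd) ∈ P) :
      ((w * u : (End ℝ V)ˣ) : End ℝ V) d ∈ PLC D.Pi :=
    apply_mem_PLC_of_len_le_len_mul hvW hd
      (fun v hv h => hbelow v hv (h.trans_lt hvlen) d hd)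
      (by rw [mul_assoc]; exact hmin' _ (mul_mem hu hdP))
  obtain ⟨s, t, hst, hst0, hne⟩ := (isChebyshevCombination_of_mem_closure ha hc
    (inv_mem hu)).exists_smul_add_smul (U_eval_mul_U_eval_sub_one_nonneg_of_ne ha hc hac)
  have hwa : (w : End ℝ V) a =
      s • ((w * u : (End ℝ V)ˣ) : End ℝ V) a + t • ((w * u : (End ℝ V)ˣ) : End ℝ V) c := by
    rw [← map_smul, ← map_smul, ← map_add, ← hst, ← units_mul_apply, mul_inv_cancel_right]
  rw [hwa]
  exact smul_add_smul_mem_PLC_or_neg_mem (hpos a ha (Subgroup.subset_closure (by simp)))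
    (hpos c hc hcP) hst0 hne

theorem apply_mem_PLC_or_neg_mem_PLC_of_forall_len_lt {w : (End ℝ V)ˣ} (hw : w ∈ D.Wgrp)
    (hbelow : ∀ v ∈ D.Wgrp, D.len v < D.len w → ∀ d ∈ D.Pi,
      (v : End ℝ V) d ∈ PLC D.Pi ∨ -((v : End ℝ V) d) ∈ PLC D.Pi)
    {a : V} (ha : a ∈ D.Pi) :
    (w : End ℝ V) a ∈ PLC D.Pi ∨ -((w : End ℝ V) a) ∈ PLC D.Pi := by
  by_cases h0 : D.len w = 0
  · rw [eq_one_of_len_eq_zero hw h0]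
    exact .inl (subset_PLC ha)
  obtain ⟨c, hc, hshort⟩ := exists_len_mul_reflUnit_lt hw h0
  rcases eq_or_ne a c with rfl | hac
  · have hwa : (w : End ℝ V) a =
        -((w * D.reflUnit a (D.norm_one a ha) : (End ℝ V)ˣ) : End ℝ V) a := by
      rw [units_mul_apply, coe_reflUnit, refl_self (D.norm_one a ha), map_neg, neg_neg]
    rw [hwa, neg_neg]
    exact (hbelow _ (mul_mem hw (reflUnit_mem_Wgrp ha)) hshort a ha).symm
  · exact apply_mem_PLC_or_neg_mem_PLC_of_dihedral hw ha hc hac hshort hbelow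

theorem apply_mem_PLC_or_neg_mem_PLC {w : (End ℝ V)ˣ} (hw : w ∈ D.Wgrp) {a : V}
    (ha : a ∈ D.Pi) : (w : End ℝ V) a ∈ PLC D.Pi ∨ -((w : End ℝ V) a) ∈ PLC D.Pi := by
  induction hn : D.len w using Nat.strong_induction_on generalizing w a with
  | _ n ih =>
    exact apply_mem_PLC_or_neg_mem_PLC_of_forall_len_lt hw
      (fun v hv hlt d hd => ih _ (hn ▸ hlt) hv hd rfl) ha

theorem mem_PLC_or_neg_mem_PLC_of_mem_roots {x : V} (hx : x ∈ D.roots) :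
    x ∈ PLC D.Pi ∨ -x ∈ PLC D.Pi := by
  obtain ⟨w, hw, a, ha, rfl⟩ := hx
  exact apply_mem_PLC_or_neg_mem_PLC hw ha

theorem dp_le_len {x : V} {v : (End ℝ V)ˣ} (hv : v ∈ D.Wgrp)
    (h : (v : End ℝ V) x ∈ D.negRoots) : D.dp x ≤ D.len v :=
  Nat.sInf_le ⟨v, hv, rfl, h⟩

theorem one_le_dp {x : V} (hx : x ∈ D.posRoots) {v : (End ℝ V)ˣ} (hv : v ∈ D.Wgrp)
    (h : (v : End ℝ V) x ∈ D.negRoots) : 1 ≤ D.dp x := by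
  have hne : {n | ∃ w ∈ D.Wgrp, D.len w = n ∧ (w : End ℝ V) x ∈ D.negRoots}.Nonempty :=
    ⟨_, v, hv, rfl, h⟩
  obtain ⟨w, hw, hlen, hneg⟩ := Nat.sInf_mem hne
  by_contra! h0
  rw [eq_one_of_len_eq_zero hw (hlen.trans (Nat.lt_one_iff.1 h0))] at hneg
  exact neg_notMem_PLC hx.2 hneg.2

theorem len_mul_reflUnit_lt_of_mem_NSet {w : (End ℝ V)ˣ} (hw : w ∈ D.Wgrp) {b : V}
    (hb : b ∈ D.NSet w) : D.len (w * D.reflUnit b (B_self_of_mem_roots hb.1.1)) < D.len w :=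
  len_mul_reflUnit_lt hw hb.1
    (fun _ hv _ => mem_PLC_or_neg_mem_PLC_of_mem_roots (apply_mem_roots hv hb.1.1)) hb.2.2

theorem mem_NSet_reflUnit_mul {v : (End ℝ V)ˣ} {a : V} (ha : a ∈ D.Pi) {b : V}
    (hb : b ∈ D.NSet v) (hba : (v : End ℝ V) b ≠ -a) :
    b ∈ D.NSet (D.reflUnit a (D.norm_one a ha) * v) := by
  obtain ⟨hbpos, hvb⟩ := hb
  set e := -((v : End ℝ V) b)
  have he : e ∈ D.posRoots := hvb
  refine ⟨hbpos, ?_⟩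
  show -(D.refl a ((v : End ℝ V) b)) ∈ D.posRoots
  rw [← neg_neg ((v : End ℝ V) b), map_neg, neg_neg]
  have hae := apply_mem_roots (reflUnit_mem_Wgrp ha) he.1
  refine ⟨hae, (mem_PLC_or_neg_mem_PLC_of_mem_roots hae).resolve_right fun h => hba ?_⟩
  rw [← neg_neg ((v : End ℝ V) b), ← eq_of_neg_refl_mem_PLC ha he.2 (B_self_of_mem_roots he.1) h]

theorem B_pos_of_len_eq_dp {x : V} (hx : x ∈ D.posRoots) {w : (End ℝ V)ˣ} (hw : w ∈ D.Wgrp)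
    (hlen : D.len w = D.dp x) (hneg : ((w⁻¹ : (End ℝ V)ˣ) : End ℝ V) x ∈ D.negRoots)
    {b : V} (hb : b ∈ D.NSet w⁻¹) : 0 < D.B b x := by
  by_contra! hle
  set v := w⁻¹ * D.reflUnit b (B_self_of_mem_roots hb.1.1)
  have hvW : v ∈ D.Wgrp := mul_mem (inv_mem hw) (reflUnit_mem_Wgrp_of_mem_roots hb.1.1)
  have hvlt : D.len v < D.len w := len_inv hw ▸ len_mul_reflUnit_lt_of_mem_NSet (inv_mem hw) hb
  have hvx : -((v : End ℝ V) x) = -(((w⁻¹ : (End ℝ V)ˣ) : End ℝ V) x) +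
      (-(2 * D.B b x)) • -(((w⁻¹ : (End ℝ V)ˣ) : End ℝ V) b) := by
    rw [units_mul_apply, coe_reflUnit, refl_apply, map_sub, map_smul,
      B_comm_of_mem_rootSpan (mem_rootSpan_of_mem_roots hx.1) (mem_rootSpan_of_mem_roots hb.1.1)]
    module
  have hvneg : (v : End ℝ V) x ∈ D.negRoots :=
    ⟨neg_mem_roots (apply_mem_roots hvW hx.1),
      hvx ▸ add_smul_mem_PLC hneg.2 (by linarith) hb.2.2⟩
  exact (dp_le_len hvW hvneg).not_gt (hlen ▸ hvlt)

theorem B_pos_of_len_eq_dp_sub_one {x : V} (hx : x ∈ D.posRoots) {w : (End ℝ V)ˣ}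
    (hw : w ∈ D.Wgrp) (hlen : D.len w = D.dp x - 1)
    (hPi : ((w⁻¹ : (End ℝ V)ˣ) : End ℝ V) x ∈ D.Pi) {b : V} (hb : b ∈ D.NSet w⁻¹) :
    0 < D.B b x := by
  set a := ((w⁻¹ : (End ℝ V)ˣ) : End ℝ V) x
  set w' := w * D.reflUnit a (D.norm_one a hPi)
  have hw'W : w' ∈ D.Wgrp := mul_mem hw (reflUnit_mem_Wgrp hPi)
  have hw'inv : w'⁻¹ = D.reflUnit a (D.norm_one a hPi) * w⁻¹ := by
    rw [mul_inv_rev, reflUnit_inv]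
  have hw'neg : ((w'⁻¹ : (End ℝ V)ˣ) : End ℝ V) x ∈ D.negRoots := by
    show -((w'⁻¹ : (End ℝ V)ˣ) : End ℝ V) x ∈ D.posRoots
    rw [hw'inv, units_mul_apply, coe_reflUnit, refl_self (D.norm_one a hPi), neg_neg]
    exact ⟨mem_roots_of_mem_Pi hPi, subset_PLC hPi⟩
  have hdp := dp_le_len (inv_mem hw'W) hw'neg
  have hdp₁ := one_le_dp hx (inv_mem hw'W) hw'neg
  have hw'len : D.len w' ≤ D.len w + 1 :=
    (len_mul_le hw (reflUnit_mem_Wgrp hPi)).trans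
      (Nat.add_le_add_left (len_le_one_of_mem_simples (reflUnit_mem_simples hPi)) _)
  rw [len_inv hw'W] at hdp
  refine B_pos_of_len_eq_dp hx hw'W (by omega) hw'neg ?_
  rw [hw'inv]
  refine mem_NSet_reflUnit_mul hPi hb fun hba => neg_notMem_PLC hx.2 ?_
  have hbx : b = -x := by
    rw [← units_apply_inv_apply w b, hba, map_neg, units_apply_inv_apply]
  exact hbx ▸ hb.1.2

end CoxeterDatum

/-- Lemma 3.18 and Lemma 3.19: roots in `N(w⁻¹)` for `w ∈ T(x)` or `w ∈ S(x)`
pair positively with `x`. -/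
theorem N_of_minimal_word_pairs_positively (D : CoxeterDatum V) {x : V}
    (hx : x ∈ D.posRoots) (w : (Module.End ℝ V)ˣ) (hw : w ∈ D.Wgrp) :
    ((D.len w = D.dp x ∧ ((w⁻¹ : (Module.End ℝ V)ˣ) : Module.End ℝ V) x ∈ D.negRoots →
      ∀ b ∈ D.NSet w⁻¹, 0 < D.B b x)) ∧
    ((D.len w = D.dp x - 1 ∧ ((w⁻¹ : (Module.End ℝ V)ˣ) : Module.End ℝ V) x ∈ D.Pi →
      ∀ b ∈ D.NSet w⁻¹, 0 < D.B b x)) :=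
  ⟨fun ⟨hlen, hneg⟩ _ hb => CoxeterDatum.B_pos_of_len_eq_dp hx hw hlen hneg hb,
    fun ⟨hlen, hPi⟩ _ hb => CoxeterDatum.B_pos_of_len_eq_dp_sub_one hx hw hlen hPi hb⟩
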